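/- arXiv:1511.03027 — 4 statements merged into one kernel-verified Lean document; each statement's English description precedes it below -/
import Mathlib

section
/- Let K be a field containing the group μ of roots of unity of ℓ-power order it possesses, with μ of finite order ℓ^m. In 𝔯_K = (ℚ_ℓ/ℤ_ℓ) ⊗_ℤ K^×, the element ℓ^(−k) ⊗ x is trivial if and only if x = ζ·y^(ℓ^k) for some root of unity ζ ∈ K of ℓ-power order and some y ∈ K^×. -/
/-!
Write `ℚ_ℓ/ℤ_ℓ` as the direct limit of the groups `ℤ/ℓ^n` along multiplication by `ℓ`, with
`1 ∈ ℤ/ℓ^n` mapping to `ℓ^{-n}`. Tensor products commute with direct limits and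
`ℤ/ℓ^n ⊗ N ≅ N/ℓ^n N`, so `ℓ^{-k} ⊗ x` vanishes iff `ℓ^n x ∈ ℓ^{n+k} N` for some `n`.
For `N = K^×` this says `x^{ℓ^n} = y^{ℓ^{n+k}}`, i.e. `x y^{-ℓ^k}` is a root of unity of
`ℓ`-power order; conversely such roots are killed by `ℓ^m`, so `n = m` works.
-/

open scoped TensorProduct

/-- The additive subgroup ℤ_ℓ of ℚ_ℓ. -/
noncomputable def padicIntSubgroup (ℓ : ℕ) [Fact ℓ.Prime] : AddSubgroup ℚ_[ℓ] :=
  (PadicInt.Coe.ringHom (p := ℓ)).toAddMonoidHom.range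

/-- The ℓ-primary divisible group ℚ_ℓ/ℤ_ℓ. -/
def QmodZ (ℓ : ℕ) [Fact ℓ.Prime] : Type := ℚ_[ℓ] ⧸ padicIntSubgroup ℓ

noncomputable instance (ℓ : ℕ) [Fact ℓ.Prime] : AddCommGroup (QmodZ ℓ) :=
  inferInstanceAs (AddCommGroup (ℚ_[ℓ] ⧸ padicIntSubgroup ℓ))

/-- The class of `ℓ^{-k}` in ℚ_ℓ/ℤ_ℓ. -/
noncomputable def ellPowInv (ℓ : ℕ) [Fact ℓ.Prime] (k : ℕ) : QmodZ ℓ :=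
  QuotientAddGroup.mk (((ℓ : ℚ_[ℓ]) ^ k)⁻¹)

section QmodZ

variable {ℓ : ℕ} [Fact ℓ.Prime]

lemma mem_padicIntSubgroup_iff {q : ℚ_[ℓ]} : q ∈ padicIntSubgroup ℓ ↔ ‖q‖ ≤ 1 :=
  ⟨fun ⟨z, hz⟩ => hz ▸ z.2, fun h => ⟨⟨q, h⟩, rfl⟩⟩

lemma zsmul_ellPowInv (c : ℤ) (n : ℕ) :
    c • ellPowInv ℓ n = QuotientAddGroup.mk ((c : ℚ_[ℓ]) * ((ℓ : ℚ_[ℓ]) ^ n)⁻¹) := by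
  rw [← zsmul_eq_mul]
  rfl

lemma zsmul_ellPowInv_eq_zero_iff (c : ℤ) (n : ℕ) :
    c • ellPowInv ℓ n = 0 ↔ (ℓ : ℤ) ^ n ∣ c := by
  have hℓ : (0 : ℝ) < ℓ := by exact_mod_cast (Fact.out : ℓ.Prime).pos
  rw [zsmul_ellPowInv, ← Padic.norm_int_le_pow_iff_dvd]
  change (QuotientAddGroup.mk _ : ℚ_[ℓ] ⧸ padicIntSubgroup ℓ) = 0 ↔ _
  rw [QuotientAddGroup.eq_zero_iff, mem_padicIntSubgroup_iff, norm_mul, norm_inv,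
    Padic.norm_p_pow, ← div_eq_mul_inv, div_le_one (by positivity)]

lemma pow_zsmul_ellPowInv_add (j k : ℕ) :
    ((ℓ : ℤ) ^ j) • ellPowInv ℓ (k + j) = ellPowInv ℓ k := by
  have hℓ : (ℓ : ℚ_[ℓ]) ≠ 0 := by exact_mod_cast (Fact.out : ℓ.Prime).ne_zero
  rw [zsmul_ellPowInv, ellPowInv]
  congr 1
  push_cast
  field_simp
  ring

lemma exists_zsmul_ellPowInv_eq (q : QmodZ ℓ) : ∃ (n : ℕ) (c : ℤ), c • ellPowInv ℓ n = q := by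
  obtain ⟨q, rfl⟩ := QuotientAddGroup.mk_surjective q
  have hℓ : (ℓ : ℚ_[ℓ]) ≠ 0 := by exact_mod_cast (Fact.out : ℓ.Prime).ne_zero
  have hℓ1 : (1 : ℝ) < ℓ := by exact_mod_cast (Fact.out : ℓ.Prime).one_lt
  obtain ⟨n, hn⟩ := pow_unbounded_of_one_lt ‖q‖ hℓ1
  have hz : ‖(ℓ : ℚ_[ℓ]) ^ n * q‖ ≤ 1 := by
    rw [norm_mul, Padic.norm_p_pow, zpow_neg, zpow_natCast, inv_mul_le_one₀ (by positivity)]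
    exact hn.le
  -- `z = ℓ^n q` is integral, and an integer `c ≡ z mod ℓ^n` gives `q ≡ c ℓ^{-n} mod ℤ_ℓ`
  set z : ℤ_[ℓ] := ⟨_, hz⟩
  obtain ⟨w, hw⟩ := Ideal.mem_span_singleton.mp (PadicInt.appr_spec n z)
  refine ⟨n, z.appr n, ?_⟩
  rw [zsmul_ellPowInv]
  refine QuotientAddGroup.eq.mpr ⟨w, ?_⟩
  have hw' := congrArg ((↑) : ℤ_[ℓ] → ℚ_[ℓ]) hw
  push_cast at hw'
  change (w : ℚ_[ℓ]) = _
  push_cast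
  field_simp
  linear_combination -hw'

end QmodZ

abbrev PowQuot (a : ℤ) (n : ℕ) : Type := ℤ ⧸ Ideal.span {a ^ n}

namespace PowQuot

variable (a : ℤ)

noncomputable def transition (i j : ℕ) (h : i ≤ j) : PowQuot a i →ₗ[ℤ] PowQuot a j :=
  Submodule.mapQ _ _ (a ^ (j - i) • LinearMap.id) <| by
    rintro _ hx
    obtain ⟨d, rfl⟩ := Ideal.mem_span_singleton.mp hx
    refine Ideal.mem_span_singleton.mpr ⟨d, ?_⟩
    simp only [LinearMap.smul_apply, LinearMap.id_coe, id_eq, smul_eq_mul]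
    rw [← mul_assoc, ← pow_add, Nat.sub_add_cancel h]

lemma transition_mk {i j : ℕ} (h : i ≤ j) (c : ℤ) :
    transition a i j h (Ideal.Quotient.mk _ c) = Ideal.Quotient.mk _ (a ^ (j - i) * c) :=
  rfl

instance : DirectedSystem (PowQuot a) (transition a · · ·) where
  map_self i x := by
    obtain ⟨c, rfl⟩ := Ideal.Quotient.mk_surjective x
    rw [transition_mk, Nat.sub_self, pow_zero, one_mul]
  map_map {k j i} hij hjk x := by
    obtain ⟨c, rfl⟩ := Ideal.Quotient.mk_surjective x
    rw [transition_mk, transition_mk, transition_mk, ← mul_assoc, ← pow_add,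
      Nat.sub_add_sub_cancel hjk hij]

variable {N : Type*} [AddCommGroup N]

lemma mk_tmul_eq_zero_iff (n : ℕ) (c : ℤ) (x : N) :
    (Ideal.Quotient.mk _ c : PowQuot a n) ⊗ₜ[ℤ] x = 0 ↔ ∃ y : N, c • x = a ^ n • y := by
  rw [← (TensorProduct.quotTensorEquivQuotSMul N _).map_eq_zero_iff,
    TensorProduct.quotTensorEquivQuotSMul_mk_tmul, Submodule.Quotient.mk_eq_zero,
    Submodule.ideal_span_singleton_smul, Submodule.mem_smul_pointwise_iff_exists]
  simp only [Submodule.mem_top, true_and, eq_comm]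

instance : DirectedSystem (fun n => PowQuot a n ⊗[ℤ] N)
    (fun _ _ h => (transition a _ _ h).rTensor N) :=
  DirectedSystem.rTensor ℤ N inferInstance

lemma of_one_tmul_eq_zero_iff (k : ℕ) (x : N) :
    Module.DirectLimit.of ℤ ℕ _ (fun _ _ h => (transition a _ _ h).rTensor N) k (1 ⊗ₜ x) = 0 ↔
      ∃ (n : ℕ) (y : N), a ^ n • x = a ^ (n + k) • y := by
  constructor
  · intro h
    obtain ⟨j, hkj, hj⟩ := Module.DirectLimit.of.zero_exact h
    rw [LinearMap.rTensor_tmul, ← map_one (Ideal.Quotient.mk _), transition_mk, mul_one,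
      mk_tmul_eq_zero_iff] at hj
    exact ⟨j - k, by rwa [Nat.sub_add_cancel hkj]⟩
  · rintro ⟨n, y, hy⟩
    rw [← Module.DirectLimit.of_f (hij := Nat.le_add_left k n), LinearMap.rTensor_tmul,
      ← map_one (Ideal.Quotient.mk _), transition_mk, mul_one, Nat.add_sub_cancel,
      (mk_tmul_eq_zero_iff a _ _ x).mpr ⟨y, hy⟩, map_zero]

end PowQuot

section DirectLimit

variable (ℓ : ℕ) [Fact ℓ.Prime]

noncomputable def PowQuot.toQmodZ (n : ℕ) : PowQuot ℓ n →ₗ[ℤ] QmodZ ℓ :=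
  Submodule.liftQ _ (LinearMap.toSpanSingleton ℤ _ (ellPowInv ℓ n)) <| by
    rw [Ideal.span, Submodule.span_singleton_le_iff_mem, LinearMap.mem_ker,
      LinearMap.toSpanSingleton_apply, zsmul_ellPowInv_eq_zero_iff]

lemma PowQuot.toQmodZ_mk (n : ℕ) (c : ℤ) :
    toQmodZ ℓ n (Ideal.Quotient.mk _ c) = c • ellPowInv ℓ n :=
  rfl

lemma PowQuot.toQmodZ_transition (i j : ℕ) (h : i ≤ j) (x : PowQuot ℓ i) :
    toQmodZ ℓ j (transition ℓ i j h x) = toQmodZ ℓ i x := by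
  obtain ⟨c, rfl⟩ := Ideal.Quotient.mk_surjective x
  obtain ⟨d, rfl⟩ := Nat.exists_eq_add_of_le h
  rw [transition_mk, toQmodZ_mk, toQmodZ_mk, mul_comm, mul_smul, Nat.add_sub_cancel_left,
    pow_zsmul_ellPowInv_add]

lemma PowQuot.toQmodZ_injective (n : ℕ) : Function.Injective (toQmodZ ℓ n) := by
  refine (injective_iff_map_eq_zero _).mpr fun x hx => ?_
  obtain ⟨c, rfl⟩ := Ideal.Quotient.mk_surjective x
  rw [toQmodZ_mk, zsmul_ellPowInv_eq_zero_iff] at hx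
  exact Ideal.Quotient.eq_zero_iff_mem.mpr (Ideal.mem_span_singleton.mpr hx)

noncomputable def directLimitPowQuotEquiv :
    Module.DirectLimit (PowQuot ℓ) (PowQuot.transition ℓ) ≃ₗ[ℤ] QmodZ ℓ :=
  LinearEquiv.ofBijective (Module.DirectLimit.lift _ _ _ _ _ (PowQuot.toQmodZ_transition ℓ))
    ⟨Module.DirectLimit.lift_injective _ _ (PowQuot.toQmodZ_injective ℓ), fun q => by
      obtain ⟨n, c, rfl⟩ := exists_zsmul_ellPowInv_eq q
      exact ⟨Module.DirectLimit.of _ _ _ _ n (Ideal.Quotient.mk _ c),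
        Module.DirectLimit.lift_of ..⟩⟩

lemma directLimitPowQuotEquiv_of (n : ℕ) (x : PowQuot ℓ n) :
    directLimitPowQuotEquiv ℓ (Module.DirectLimit.of _ _ _ _ n x) = PowQuot.toQmodZ ℓ n x :=
  Module.DirectLimit.lift_of (PowQuot.toQmodZ ℓ) (PowQuot.toQmodZ_transition ℓ) x

lemma directLimitPowQuotEquiv_symm_ellPowInv (k : ℕ) :
    (directLimitPowQuotEquiv ℓ).symm (ellPowInv ℓ k) =
      Module.DirectLimit.of ℤ ℕ (PowQuot ℓ) (PowQuot.transition ℓ) k 1 := by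
  rw [LinearEquiv.symm_apply_eq, directLimitPowQuotEquiv_of, ← map_one (Ideal.Quotient.mk _),
    PowQuot.toQmodZ_mk, one_smul]

variable {ℓ}

theorem ellPowInv_tmul_eq_zero_iff {N : Type*} [AddCommGroup N] (k : ℕ) (x : N) :
    ellPowInv ℓ k ⊗ₜ[ℤ] x = 0 ↔ ∃ (n : ℕ) (y : N), ℓ ^ n • x = ℓ ^ (n + k) • y := by
  rw [← (TensorProduct.congr (directLimitPowQuotEquiv ℓ).symm (.refl ℤ N)).map_eq_zero_iff,
    TensorProduct.congr_tmul, LinearEquiv.refl_apply, directLimitPowQuotEquiv_symm_ellPowInv]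
  -- `directLimitLeft` expects `Module.DirectLimit.module`, which agrees with
  -- `AddCommGroup.toIntModule` only up to unfolding, so its `tmul_of` lemma is used on `h`
  have h := (TensorProduct.directLimitLeft (PowQuot.transition ℓ) N).map_eq_zero_iff
    (x := Module.DirectLimit.of _ _ _ _ k 1 ⊗ₜ x)
  rw [TensorProduct.directLimitLeft_tmul_of, PowQuot.of_one_tmul_eq_zero_iff] at h
  refine h.symm.trans ?_
  simp only [← Nat.cast_pow, natCast_zsmul]

end DirectLimit

theorem exists_pow_eq_pow_iff_exists_mul_pow {G : Type*} [CommGroup G] {ℓ m : ℕ}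
    (hμ : ∀ ζ : G, (∃ t : ℕ, ζ ^ (ℓ ^ t) = 1) → ζ ^ (ℓ ^ m) = 1) (k : ℕ) (x : G) :
    (∃ (n : ℕ) (y : G), x ^ (ℓ ^ n) = y ^ (ℓ ^ (n + k))) ↔
      ∃ ζ y : G, (∃ t : ℕ, ζ ^ (ℓ ^ t) = 1) ∧ x = ζ * y ^ (ℓ ^ k) := by
  constructor
  · rintro ⟨n, y, hxy⟩
    refine ⟨x * (y ^ ℓ ^ k)⁻¹, y, ⟨n, ?_⟩, by group⟩
    rw [mul_pow, inv_pow, ← pow_mul, ← pow_add, add_comm, hxy, mul_inv_cancel]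
  · rintro ⟨ζ, y, hζ, rfl⟩
    refine ⟨m, y, ?_⟩
    rw [mul_pow, hμ ζ hζ, one_mul, ← pow_mul, ← pow_add, add_comm]

theorem stmt_7_general (ℓ : ℕ) [Fact ℓ.Prime] (K : Type) [Field K] (m : ℕ)
    (hμ : ∀ ζ : Kˣ, (∃ t : ℕ, ζ ^ (ℓ ^ t) = 1) → ζ ^ (ℓ ^ m) = 1)
    (k : ℕ) (x : Kˣ) :
    (ellPowInv ℓ k) ⊗ₜ[ℤ] (Additive.ofMul x) = (0 : (QmodZ ℓ) ⊗[ℤ] (Additive Kˣ))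
      ↔ ∃ ζ y : Kˣ, (∃ t : ℕ, ζ ^ (ℓ ^ t) = 1) ∧ x = ζ * y ^ (ℓ ^ k) := by
  rw [ellPowInv_tmul_eq_zero_iff, ← exists_pow_eq_pow_iff_exists_mul_pow hμ]
  simp only [Additive.ofMul.surjective.exists, ← ofMul_pow, EmbeddingLike.apply_eq_iff_eq]

/-- Let K be a field whose ℓ-power roots of unity form a finite cyclic
group of order ℓ^m.  In 𝔯_K = (ℚ_ℓ/ℤ_ℓ) ⊗_ℤ K^×, the element ℓ^{-k} ⊗ x is trivial iff
x = ζ·y^{ℓ^k} for some ℓ-power root of unity ζ ∈ K and some y ∈ K^×. -/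
theorem stmt_7 (ℓ : ℕ) [Fact ℓ.Prime] (K : Type) [Field K] (m : ℕ)
    (hμ : ∀ ζ : Kˣ, (∃ t : ℕ, ζ ^ (ℓ ^ t) = 1) → ζ ^ (ℓ ^ m) = 1)
    (hcyc : ∃ ζ : Kˣ, orderOf ζ = ℓ ^ m)
    (k : ℕ) (x : Kˣ) :
    (ellPowInv ℓ k) ⊗ₜ[ℤ] (Additive.ofMul x) = (0 : (QmodZ ℓ) ⊗[ℤ] (Additive Kˣ))
      ↔ ∃ ζ y : Kˣ, (∃ t : ℕ, ζ ^ (ℓ ^ t) = 1) ∧ x = ζ * y ^ (ℓ ^ k) :=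
  stmt_7_general ℓ K m hμ k x
end

section
/- Let M be a ℤ_ℓ-module equipped with an action of an element γ such that M is annihilated by γ·u − 1 for a unit u ∈ ℤ_ℓ^× (i.e., γ acts as u^(−1)). If γ acts on a submodule N as the identity composed with multiplication by a unit congruent to 1 mod ℓ, then the elements of M fixed simultaneously by γ^(ℓ^n) and by (γ/(1+ℓ^m))^(ℓ^n) are exactly the elements killed by ℓ^(m+n). -/
/-!
On the `γ ^ ℓ ^ n`-fixed part the second condition reads `((1 + ℓ ^ m) ^ ℓ ^ n - 1) • x = 0`.
By lifting the exponent, `(1 + ℓ ^ m) ^ ℓ ^ n - 1` has `ℓ`-adic valuation exactly `m + n`, so it is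
`ℓ ^ (m + n)` times a unit of `ℤ_[ℓ]`. For `ℓ = 2` the lifting formula carries the extra term
`v₂(2 + 2 ^ m) - 1`, which vanishes as `m ≥ 2`.
-/

theorem Associated.smul_eq_zero_iff {R M : Type*} [CommMonoid R] [AddMonoid M]
    [DistribMulAction R M] {a b : R} (h : Associated a b) {x : M} : a • x = 0 ↔ b • x = 0 := by
  obtain ⟨u, rfl⟩ := h
  rw [mul_comm, mul_smul, u.isUnit.smul_eq_zero]

theorem Nat.Prime.not_dvd_one_add_pow {p k : ℕ} (hp : p.Prime) (hk : k ≠ 0) : ¬p ∣ 1 + p ^ k := by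
  rw [Nat.dvd_add_left (dvd_pow_self p hk)]
  exact hp.not_dvd_one

namespace padicValNat

theorem one_add_prime_pow_pow_sub_one_of_odd {p : ℕ} [hp : Fact p.Prime] (hodd : Odd p) {m : ℕ}
    (hm : m ≠ 0) (n : ℕ) : padicValNat p ((1 + p ^ m) ^ p ^ n - 1) = m + n := by
  have h := pow_sub_pow (x := 1 + p ^ m) (y := 1) hodd (by simp [hp.out.pos])
    (by simp [dvd_pow_self p hm]) (hp.out.not_dvd_one_add_pow hm) (n := p ^ n)
    (pow_ne_zero n hp.out.ne_zero)
  simpa using h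

theorem one_add_two_pow_pow_sub_one {m : ℕ} (hm : 2 ≤ m) (n : ℕ) :
    padicValNat 2 ((1 + 2 ^ m) ^ 2 ^ n - 1) = m + n := by
  rcases n.eq_zero_or_pos with rfl | hn
  · simp
  obtain ⟨k, rfl⟩ : ∃ k, m = k + 1 := ⟨m - 1, by omega⟩
  have hplus : padicValNat 2 (1 + 2 ^ (k + 1) + 1) = 1 := by
    rw [show 1 + 2 ^ (k + 1) + 1 = 2 * (1 + 2 ^ k) by ring,
      padicValNat.mul two_ne_zero (by positivity),
      padicValNat.eq_zero_of_not_dvd (Nat.prime_two.not_dvd_one_add_pow (by omega))]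
    simp
  have h := pow_two_sub_one (x := 1 + 2 ^ (k + 1)) (n := 2 ^ n) (by simp)
    (Nat.prime_two.not_dvd_one_add_pow (by omega)) (by positivity)
    ((Nat.even_pow' hn.ne').mpr even_two)
  simp [hplus] at h
  omega

theorem one_add_prime_pow_pow_sub_one {p : ℕ} [hp : Fact p.Prime] {m : ℕ} (hm : 1 ≤ m)
    (hm2 : p = 2 → 2 ≤ m) (n : ℕ) : padicValNat p ((1 + p ^ m) ^ p ^ n - 1) = m + n := by
  rcases hp.out.eq_two_or_odd' with rfl | hodd
  · exact one_add_two_pow_pow_sub_one (hm2 rfl) n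
  · exact one_add_prime_pow_pow_sub_one_of_odd hodd (by omega) n

end padicValNat

namespace PadicInt

variable {p : ℕ} [Fact p.Prime]

theorem valuation_natCast (k : ℕ) : (k : ℤ_[p]).valuation = padicValNat p k := by
  rw [← Nat.cast_inj (R := ℤ), ← valuation_coe, coe_natCast, Padic.valuation_natCast]

theorem associated_pow_padicValNat_natCast {k : ℕ} (hk : k ≠ 0) :
    Associated ((p : ℤ_[p]) ^ padicValNat p k) (k : ℤ_[p]) := by
  have hk' : (k : ℤ_[p]) ≠ 0 := Nat.cast_ne_zero.mpr hk
  refine ⟨unitCoeff hk', ?_⟩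
  rw [mul_comm, ← valuation_natCast, ← unitCoeff_spec hk']

theorem associated_prime_pow_one_add_pow_pow_sub_one {m : ℕ} (hm : 1 ≤ m) (hm2 : p = 2 → 2 ≤ m)
    (n : ℕ) : Associated ((p : ℤ_[p]) ^ (m + n)) ((1 + (p : ℤ_[p]) ^ m) ^ p ^ n - 1) := by
  have hp := (Fact.out : p.Prime)
  have hlt : 1 < (1 + p ^ m) ^ p ^ n :=
    Nat.one_lt_pow (pow_ne_zero n hp.ne_zero) (by simp [hp.pos])
  have h := associated_pow_padicValNat_natCast (p := p) (Nat.sub_ne_zero_of_lt hlt)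
  rw [padicValNat.one_add_prime_pow_pow_sub_one hm hm2] at h
  simpa [Nat.cast_sub hlt.le] using h

end PadicInt

/-- Scolie: Let M be a ℤ_ℓ-module with a ℤ_ℓ-linear operator γ, and let
γ* = γ/(1+ℓ^m), so that `x` is fixed by `γ*^(ℓ^n)` iff `γ^(ℓ^n) x = (1+ℓ^m)^(ℓ^n) • x`.
Then the elements fixed simultaneously by `γ^(ℓ^n)` and `γ*^(ℓ^n)` are exactly the
elements of the `γ^(ℓ^n)`-fixed part killed by `ℓ^(m+n)`. -/
theorem stmt_9 (ℓ : ℕ) [Fact ℓ.Prime] (m n : ℕ) (hm : 1 ≤ m) (hm2 : ℓ = 2 → 2 ≤ m)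
    (M : Type) [AddCommGroup M] [Module ℤ_[ℓ] M] (γ : M →ₗ[ℤ_[ℓ]] M) (x : M) :
    ((γ ^ (ℓ ^ n)) x = x ∧ (γ ^ (ℓ ^ n)) x = ((1 + (ℓ : ℤ_[ℓ]) ^ m) ^ (ℓ ^ n)) • x)
      ↔ ((γ ^ (ℓ ^ n)) x = x ∧ ((ℓ : ℤ_[ℓ]) ^ (m + n)) • x = 0) := by
  refine and_congr_right fun hfix => ?_
  rw [hfix, eq_comm,
    ← (PadicInt.associated_prime_pow_one_add_pow_pow_sub_one hm hm2 n).symm.smul_eq_zero_iff,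
    sub_smul, one_smul, sub_eq_zero]
end

section
/- Let (M_n, f_n : M_{n+1} → M_n) be an inverse system of ℤ_ℓ-modules where each M_n is annihilated by ℓ^(m+n), and suppose each transition map f_n equals multiplication by ℓ composed with an automorphism of M_{n+1} (multiplication by a unit of ℤ_ℓ). Then the image π_0(lim M_n) of the inverse limit in M_0 coincides with the image of the inverse limit of the system (M_n, g_n) where g_n is multiplication by ℓ. -/
/-! Rescaling the `n`-th term of a coherent sequence by the unit `u 0 * ⋯ * u (n - 1)` turns
the transition maps `ℓ * u n` into `ℓ` and leaves the `0`-th term unchanged. -/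

section Coherent

variable {R N : Type*} [Semiring R] [AddCommMonoid N] [Module R N]

/-- The image in `M 0` of the inverse limit of the system `M (n + 1) → M n`, `x ↦ c n • x`. -/
def coherentInitialTerms (M : ℕ → Submodule R N) (c : ℕ → R) : Set N :=
  {x0 | x0 ∈ M 0 ∧ ∃ x : ℕ → N, (∀ n, x n ∈ M n) ∧ x 0 = x0 ∧ ∀ n, x n = c n • x (n + 1)}

theorem coherentInitialTerms_subset_of_twist (M : ℕ → Submodule R N) {c c' : ℕ → R}
    (v : ℕ → Rˣ) (hv0 : v 0 = 1) (hv : ∀ n, (v n : R) * c n = c' n * v (n + 1)) :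
    coherentInitialTerms M c ⊆ coherentInitialTerms M c' := by
  rintro _ ⟨hx0, x, hmem, rfl, hrec⟩
  refine ⟨hx0, fun n => (v n : R) • x n, fun n => (M n).smul_mem _ (hmem n), by simp [hv0],
    fun n => ?_⟩
  simp only [hrec n, smul_smul, hv]

theorem coherentInitialTerms_eq_of_twist (M : ℕ → Submodule R N) {c c' : ℕ → R}
    (v : ℕ → Rˣ) (hv0 : v 0 = 1) (hv : ∀ n, (v n : R) * c n = c' n * v (n + 1)) :
    coherentInitialTerms M c = coherentInitialTerms M c' := by
  refine (coherentInitialTerms_subset_of_twist M v hv0 hv).antisymm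
    (coherentInitialTerms_subset_of_twist M (fun n => (v n)⁻¹) (by simp [hv0]) fun n => ?_)
  rw [Units.inv_mul_eq_iff_eq_mul, ← mul_assoc, Units.eq_mul_inv_iff_mul_eq, hv]

end Coherent

theorem stmt_13_general (ℓ : ℕ) [Fact ℓ.Prime]
    (N : Type) [AddCommGroup N] [Module ℤ_[ℓ] N]
    (M : ℕ → Submodule ℤ_[ℓ] N)
    (u : ℕ → ℤ_[ℓ]ˣ) :
    {x0 : N | x0 ∈ M 0 ∧ ∃ x : ℕ → N, (∀ n, x n ∈ M n) ∧ x 0 = x0 ∧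
        ∀ n, x n = ((ℓ : ℤ_[ℓ]) * (u n : ℤ_[ℓ])) • x (n + 1)}
      = {x0 : N | x0 ∈ M 0 ∧ ∃ x : ℕ → N, (∀ n, x n ∈ M n) ∧ x 0 = x0 ∧
        ∀ n, x n = (ℓ : ℤ_[ℓ]) • x (n + 1)} :=
  coherentInitialTerms_eq_of_twist M (fun n => ∏ k ∈ Finset.range n, u k) (by simp) fun n => by
    simp only [Finset.prod_range_succ, Units.val_mul]
    ring

/-- Let (M n) be a decreasing family of ℤ_ℓ-submodules of an ambient
module N with ℓ^(m+n)·M n = 0, and suppose the transition maps of the inverse system are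
multiplication by ℓ·u n for units u n of ℤ_ℓ (multiplication by ℓ composed with an
automorphism).  Then the set of initial terms of coherent sequences for these maps
coincides with the set of initial terms of coherent sequences for multiplication by ℓ. -/
theorem stmt_13 (ℓ : ℕ) [Fact ℓ.Prime] (m : ℕ) (hm : 1 ≤ m)
    (N : Type) [AddCommGroup N] [Module ℤ_[ℓ] N]
    (M : ℕ → Submodule ℤ_[ℓ] N)
    (htor : ∀ n, ∀ x ∈ M n, ((ℓ : ℤ_[ℓ]) ^ (m + n)) • x = 0)
    (u : ℕ → ℤ_[ℓ]ˣ) :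
    {x0 : N | x0 ∈ M 0 ∧ ∃ x : ℕ → N, (∀ n, x n ∈ M n) ∧ x 0 = x0 ∧
        ∀ n, x n = ((ℓ : ℤ_[ℓ]) * (u n : ℤ_[ℓ])) • x (n + 1)}
      = {x0 : N | x0 ∈ M 0 ∧ ∃ x : ℕ → N, (∀ n, x n ∈ M n) ∧ x 0 = x0 ∧
        ∀ n, x n = (ℓ : ℤ_[ℓ]) • x (n + 1)} :=
  stmt_13_general ℓ N M u
end

section
/- Let ℓ be a prime, m ≥ 1 (m ≥ 2 if ℓ = 2), and let R be a multiplicative ℤ_ℓ-module (written multiplicatively) with an action of γ. Set γ* = γ/(1+ℓ^m). Then for all n, R^{(γ−1)ℓ^n} ⊆ R^{(γ*−1)ℓ^n} · R^{ℓ^{m+n}}; in particular, if moreover R^{ℓ^{m+n}} = R^{γ*^{ℓ^n}−1}, then R^{(γ−1)ℓ^n} ⊆ R^{γ*−1}. -/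
theorem aux_range_smul {K R : Type*} [CommRing K] [AddCommGroup R] [Module K R]
    (a : K) (f : R →ₗ[K] R) : LinearMap.range (a • f) ≤ LinearMap.range f := by
  rintro y ⟨x, rfl⟩
  exact ⟨a • x, by simp⟩

theorem aux_range_pow_sub_one {K R : Type*} [CommRing K] [AddCommGroup R] [Module K R]
    (g : R →ₗ[K] R) (k : ℕ) :
    LinearMap.range (g ^ k - 1) ≤ LinearMap.range (g - 1) := by
  have h : g ^ k - 1 = (g - 1) * (∑ i ∈ Finset.range k, g ^ i) := (mul_geom_sum g k).symm
  rw [h, Module.End.mul_eq_comp]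
  exact LinearMap.range_comp_le_range _ _

/-- Let R be a ℤ_ℓ-module with an automorphism γ, and γ* = γ/(1+ℓ^m).
Then `R^{(γ−1)ℓ^n} ⊆ R^{(γ*−1)ℓ^n}·R^{ℓ^{m+n}}` (i.e. the image of ℓ^n(γ−1) is contained
in the sum of the images of ℓ^n(γ*−1) and of ℓ^{m+n}); and if moreover
`R^{ℓ^{m+n}} = R^{γ*^{ℓ^n}−1}` then `R^{(γ−1)ℓ^n} ⊆ R^{γ*−1}`. -/
theorem stmt_15 (ℓ : ℕ) [Fact ℓ.Prime] (m n : ℕ) (hm : 1 ≤ m) (hm2 : ℓ = 2 → 2 ≤ m)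
    (R : Type) [AddCommGroup R] [Module ℤ_[ℓ] R] (γ : R ≃ₗ[ℤ_[ℓ]] R)
    (c : ℤ_[ℓ]ˣ) (hc : (c : ℤ_[ℓ]) = 1 + (ℓ : ℤ_[ℓ]) ^ m) :
    (LinearMap.range (((ℓ : ℤ_[ℓ]) ^ n) • (γ.toLinearMap - LinearMap.id))
        ≤ LinearMap.range (((ℓ : ℤ_[ℓ]) ^ n) •
              (((c⁻¹ : ℤ_[ℓ]ˣ) : ℤ_[ℓ]) • γ.toLinearMap - LinearMap.id))
          ⊔ LinearMap.range (((ℓ : ℤ_[ℓ]) ^ (m + n)) • (LinearMap.id : R →ₗ[ℤ_[ℓ]] R))) ∧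
    (LinearMap.range (((ℓ : ℤ_[ℓ]) ^ (m + n)) • (LinearMap.id : R →ₗ[ℤ_[ℓ]] R))
        = LinearMap.range ((((c⁻¹ : ℤ_[ℓ]ˣ) : ℤ_[ℓ]) • γ.toLinearMap) ^ (ℓ ^ n)
            - LinearMap.id) →
      LinearMap.range (((ℓ : ℤ_[ℓ]) ^ n) • (γ.toLinearMap - LinearMap.id))
        ≤ LinearMap.range ((((c⁻¹ : ℤ_[ℓ]ˣ) : ℤ_[ℓ]) • γ.toLinearMap - LinearMap.id))) := by
  have hcc : ((c⁻¹ : ℤ_[ℓ]ˣ) : ℤ_[ℓ]) * (c : ℤ_[ℓ]) = 1 := by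
    exact_mod_cast Units.inv_mul c
  have key : LinearMap.range (((ℓ : ℤ_[ℓ]) ^ n) • (γ.toLinearMap - LinearMap.id))
      ≤ LinearMap.range (((ℓ : ℤ_[ℓ]) ^ n) •
            (((c⁻¹ : ℤ_[ℓ]ˣ) : ℤ_[ℓ]) • γ.toLinearMap - LinearMap.id))
        ⊔ LinearMap.range (((ℓ : ℤ_[ℓ]) ^ (m + n)) • (LinearMap.id : R →ₗ[ℤ_[ℓ]] R)) := by
    rintro y ⟨x, rfl⟩
    refine Submodule.mem_sup.2 ⟨_, ⟨x, rfl⟩, _, ⟨(((c⁻¹ : ℤ_[ℓ]ˣ) : ℤ_[ℓ]) • γ x), rfl⟩, ?_⟩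
    simp only [LinearMap.smul_apply, LinearMap.sub_apply, LinearMap.id_apply,
      LinearEquiv.coe_coe, LinearMap.smul_apply]
    match_scalars
    · linear_combination ((ℓ : ℤ_[ℓ]) ^ n) * hcc - ((ℓ : ℤ_[ℓ]) ^ n *
        ((c⁻¹ : ℤ_[ℓ]ˣ) : ℤ_[ℓ])) * hc
    · ring
  refine ⟨key, fun h => ?_⟩
  refine key.trans (sup_le ?_ ?_)
  · exact aux_range_smul _ _
  · rw [h]
    have := aux_range_pow_sub_one (K := ℤ_[ℓ]) (R := R)
      (((c⁻¹ : ℤ_[ℓ]ˣ) : ℤ_[ℓ]) • γ.toLinearMap) (ℓ ^ n)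
    simpa [Module.End.one_eq_id] using this
end
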